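/- Fix a real number a ≠ 0 and let G be the subgroup of isometries of ℝ³ generated by the four maps R₀(x,y,z) = (−z + a, −y, −x + a), R₁(x,y,z) = (y, x, z), R₂(x,y,z) = (x, −y, z), R̂₂(x,y,z) = (z, y, x). Then the orbit of the origin under G (the vertex set of the regular complex K₈(1,2)) equals the face-centered cubic lattice Λ_{(a,a,0)} = {(am₁, am₂, am₃) : m₁, m₂, m₃ ∈ ℤ, m₁ + m₂ + m₃ even}. -/

import Mathlib

noncomputable section

abbrev E3 : Type := EuclideanSpace ℝ (Fin 3)

def pt (x y z : ℝ) : E3 := WithLp.toLp 2 ![x, y, z]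

/-! Every generator is an involution mapping the lattice into itself, so the lattice is stable
under the whole group and contains the orbit of the origin. Conversely, the group contains
`-id` (the product of the three coordinate sign changes, which are conjugates of `R₂`), and
`R₀ R̂₂ (-id)` is the translation by `(a, 0, a)`. Conjugating it by the coordinate permutations
`R₁` and `R₁ R̂₂ R₁` gives the translations by `(0, a, a)` and `(a, a, 0)`, which generate the
lattice, so every lattice point is the image of the origin under a translation in the group. -/

open Set Function

namespace IsometryEquiv

variable {α : Type*} [PseudoEMetricSpace α]

theorem inv_eq_self_of_involutive {g : α ≃ᵢ α} (hg : Involutive g) : g⁻¹ = g :=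
  ext fun x => g.injective (by rw [apply_inv_self, hg])

theorem mapsTo_of_mem_closure {s : Set (α ≃ᵢ α)} {S : Set α}
    (hs : ∀ g ∈ s, Involutive g ∧ MapsTo g S S) {g : α ≃ᵢ α} (hg : g ∈ Subgroup.closure s) :
    MapsTo g S S := by
  induction hg using Subgroup.closure_induction'' with
  | mem g hg => exact (hs g hg).2
  | inv_mem g hg =>
    rw [inv_eq_self_of_involutive (hs g hg).1]
    exact (hs g hg).2
  | one => exact mapsTo_id S
  | mul g h _ _ hg hh => exact hg.comp hh

variable {E : Type*} [SeminormedAddGroup E]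

theorem addLeft_zero : addLeft (0 : E) = 1 :=
  ext zero_add

theorem addLeft_add (v w : E) : addLeft (v + w) = addLeft v * addLeft w :=
  ext (add_assoc v w)

theorem addLeft_neg (v : E) : addLeft (-v) = (addLeft v)⁻¹ := by
  rw [← addLeft_symm]
  rfl

end IsometryEquiv

section Translations

variable {E : Type*} [SeminormedAddGroup E]

open IsometryEquiv

def translationSubgroup (H : Subgroup (E ≃ᵢ E)) : AddSubgroup E where
  carrier := {v | addLeft v ∈ H}
  zero_mem' := by simp only [mem_ofPred_eq, addLeft_zero, H.one_mem]
  add_mem' hv hw := by simp only [mem_ofPred_eq, addLeft_add, H.mul_mem hv hw]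
  neg_mem' hv := by simp only [mem_ofPred_eq, addLeft_neg, H.inv_mem hv]

variable {H : Subgroup (E ≃ᵢ E)}

theorem mem_translationSubgroup_of_apply {g : E ≃ᵢ E} (hg : g ∈ H) {v : E}
    (h : ∀ x, g x = v + x) : v ∈ translationSubgroup H := by
  rwa [show g = addLeft v from ext h] at hg

theorem exists_mem_apply_zero_eq {v : E} (hv : v ∈ translationSubgroup H) :
    ∃ g ∈ H, g 0 = v :=
  ⟨addLeft v, hv, add_zero v⟩

theorem apply_mem_translationSubgroup {σ : E ≃ᵢ E} (hσ : σ ∈ H)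
    (hadd : ∀ x y, σ (x + y) = σ x + σ y) {v : E} (hv : v ∈ translationSubgroup H) :
    σ v ∈ translationSubgroup H :=
  mem_translationSubgroup_of_apply (H.mul_mem (H.mul_mem hσ hv) (H.inv_mem hσ)) fun x => by
    simp [mul_apply, hadd]

end Translations

@[simp] theorem pt_apply_zero (x y z : ℝ) : pt x y z 0 = x := rfl
@[simp] theorem pt_apply_one (x y z : ℝ) : pt x y z 1 = y := rfl
@[simp] theorem pt_apply_two (x y z : ℝ) : pt x y z 2 = z := rfl

theorem E3.ext {x y : E3} (h0 : x 0 = y 0) (h1 : x 1 = y 1) (h2 : x 2 = y 2) : x = y := by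
  ext i
  fin_cases i <;> assumption

def halfTurn (a : ℝ) (x : E3) : E3 := pt (-(x 2) + a) (-(x 1)) (-(x 0) + a)

def swapXY (x : E3) : E3 := pt (x 1) (x 0) (x 2)

def flipY (x : E3) : E3 := pt (x 0) (-(x 1)) (x 2)

def swapXZ (x : E3) : E3 := pt (x 2) (x 1) (x 0)

def fcc (a : ℝ) : Set E3 :=
  {y | ∃ m1 m2 m3 : ℤ, y 0 = a * m1 ∧ y 1 = a * m2 ∧ y 2 = a * m3 ∧ Even (m1 + m2 + m3)}

theorem halfTurn_involutive (a : ℝ) : Involutive (halfTurn a) :=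
  fun x => E3.ext (by simp [halfTurn]) (by simp [halfTurn]) (by simp [halfTurn])

theorem swapXY_involutive : Involutive swapXY := fun _ => E3.ext rfl rfl rfl

theorem flipY_involutive : Involutive flipY :=
  fun x => E3.ext rfl (by simp [flipY]) rfl

theorem swapXZ_involutive : Involutive swapXZ := fun _ => E3.ext rfl rfl rfl

theorem swapXY_add (x y : E3) : swapXY (x + y) = swapXY x + swapXY y :=
  E3.ext rfl rfl rfl

theorem swapXZ_add (x y : E3) : swapXZ (x + y) = swapXZ x + swapXZ y :=
  E3.ext rfl rfl rfl

theorem zero_mem_fcc (a : ℝ) : (0 : E3) ∈ fcc a :=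
  ⟨0, 0, 0, by simp, by simp, by simp, Even.zero⟩

theorem mapsTo_halfTurn_fcc (a : ℝ) : MapsTo (halfTurn a) (fcc a) (fcc a) := by
  rintro y ⟨m1, m2, m3, h1, h2, h3, t, ht⟩
  refine ⟨1 - m3, -m2, 1 - m1, ?_, ?_, ?_, ⟨1 - t, by omega⟩⟩ <;>
    simp only [halfTurn, pt_apply_zero, pt_apply_one, pt_apply_two, h1, h2, h3] <;>
    push_cast <;> ring

theorem mapsTo_swapXY_fcc (a : ℝ) : MapsTo swapXY (fcc a) (fcc a) := by
  rintro y ⟨m1, m2, m3, h1, h2, h3, t, ht⟩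
  exact ⟨m2, m1, m3, h2, h1, h3, ⟨t, by omega⟩⟩

theorem mapsTo_flipY_fcc (a : ℝ) : MapsTo flipY (fcc a) (fcc a) := by
  rintro y ⟨m1, m2, m3, h1, h2, h3, t, ht⟩
  refine ⟨m1, -m2, m3, h1, ?_, h3, ⟨t - m2, by omega⟩⟩
  simp [flipY, h2]

theorem mapsTo_swapXZ_fcc (a : ℝ) : MapsTo swapXZ (fcc a) (fcc a) := by
  rintro y ⟨m1, m2, m3, h1, h2, h3, t, ht⟩
  exact ⟨m3, m2, m1, h3, h2, h1, ⟨t, by omega⟩⟩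

theorem fcc_subset {K : AddSubgroup E3} {a : ℝ} (h1 : pt a a 0 ∈ K) (h2 : pt a 0 a ∈ K)
    (h3 : pt 0 a a ∈ K) : fcc a ⊆ K := by
  rintro y ⟨m1, m2, m3, hy1, hy2, hy3, t, ht⟩
  have hm : (m1 : ℝ) + m2 + m3 = t + t := by exact_mod_cast ht
  have hy : y = (t - m3) • pt a a 0 + (t - m2) • pt a 0 a + (t - m1) • pt 0 a a := by
    refine E3.ext ?_ ?_ ?_ <;> simp [hy1, hy2, hy3] <;> linear_combination a * hm
  rw [hy]
  exact K.add_mem (K.add_mem (K.zsmul_mem h1 _) (K.zsmul_mem h2 _)) (K.zsmul_mem h3 _)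

section Generators

variable {H : Subgroup (E3 ≃ᵢ E3)} {R0 R1 R2 R2' : E3 ≃ᵢ E3}

theorem exists_mem_apply_eq_neg (hR1 : R1 ∈ H) (hR2 : R2 ∈ H) (hR2' : R2' ∈ H)
    (e1 : ⇑R1 = swapXY) (e2 : ⇑R2 = flipY) (e2' : ⇑R2' = swapXZ) :
    ∃ N ∈ H, ∀ x, N x = -x := by
  have hflipX : R1 * R2 * R1 ∈ H := H.mul_mem (H.mul_mem hR1 hR2) hR1
  refine ⟨R1 * R2 * R1 * R2 * (R2' * (R1 * R2 * R1) * R2'), ?_, fun x => ?_⟩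
  · exact H.mul_mem (H.mul_mem hflipX hR2) (H.mul_mem (H.mul_mem hR2' hflipX) hR2')
  · refine E3.ext ?_ ?_ ?_ <;> simp [e1, e2, e2', swapXY, flipY, swapXZ]

theorem fcc_subset_translationSubgroup {a : ℝ} (hR0 : R0 ∈ H) (hR1 : R1 ∈ H) (hR2 : R2 ∈ H)
    (hR2' : R2' ∈ H) (e0 : ⇑R0 = halfTurn a) (e1 : ⇑R1 = swapXY) (e2 : ⇑R2 = flipY)
    (e2' : ⇑R2' = swapXZ) : fcc a ⊆ translationSubgroup H := by
  obtain ⟨N, hN, hNx⟩ := exists_mem_apply_eq_neg hR1 hR2 hR2' e1 e2 e2'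
  -- `R0 * R2'` is the point reflection in `(a/2, 0, a/2)` and `N` the one in the origin.
  have h2 : pt a 0 a ∈ translationSubgroup H := by
    refine mem_translationSubgroup_of_apply (H.mul_mem (H.mul_mem hR0 hR2') hN) fun x => ?_
    refine E3.ext ?_ ?_ ?_ <;> simp [hNx, e0, e2', halfTurn, swapXZ] <;> ring
  have h3 : pt 0 a a ∈ translationSubgroup H := by
    convert apply_mem_translationSubgroup hR1 (by simpa [e1] using swapXY_add) h2
    simp [e1, swapXY]
  have h1 : pt a a 0 ∈ translationSubgroup H := by
    have hS : R1 * R2' * R1 ∈ H := H.mul_mem (H.mul_mem hR1 hR2') hR1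
    convert apply_mem_translationSubgroup hS (by simp [e1, e2', swapXY_add, swapXZ_add]) h2
    simp [e1, e2', swapXY, swapXZ]
  exact fcc_subset h1 h2 h3

end Generators

theorem vertex_set_K8_12_general
    (a : ℝ)
    (R0 R1 R2 R2' : E3 ≃ᵢ E3)
    (hR0 : ∀ x : E3, R0 x = pt (-(x 2) + a) (-(x 1)) (-(x 0) + a))
    (hR1 : ∀ x : E3, R1 x = pt (x 1) (x 0) (x 2))
    (hR2 : ∀ x : E3, R2 x = pt (x 0) (-(x 1)) (x 2))
    (hR2' : ∀ x : E3, R2' x = pt (x 2) (x 1) (x 0)) :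
    {y : E3 | ∃ g ∈ Subgroup.closure {R0, R1, R2, R2'}, g 0 = y} =
      {y : E3 | ∃ m1 m2 m3 : ℤ,
        y 0 = a * m1 ∧ y 1 = a * m2 ∧ y 2 = a * m3 ∧ Even (m1 + m2 + m3)} := by
  have e0 : ⇑R0 = halfTurn a := funext hR0
  have e1 : ⇑R1 = swapXY := funext hR1
  have e2 : ⇑R2 = flipY := funext hR2
  have e2' : ⇑R2' = swapXZ := funext hR2'
  change _ = fcc a
  ext y
  constructor
  · rintro ⟨g, hg, rfl⟩
    refine IsometryEquiv.mapsTo_of_mem_closure ?_ hg (zero_mem_fcc a)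
    simp only [mem_insert_iff, mem_singleton_iff, forall_eq_or_imp, forall_eq, e0, e1, e2, e2']
    exact ⟨⟨halfTurn_involutive a, mapsTo_halfTurn_fcc a⟩,
      ⟨swapXY_involutive, mapsTo_swapXY_fcc a⟩, ⟨flipY_involutive, mapsTo_flipY_fcc a⟩,
      ⟨swapXZ_involutive, mapsTo_swapXZ_fcc a⟩⟩
  · intro hy
    have mem {g : E3 ≃ᵢ E3} (hg : g ∈ ({R0, R1, R2, R2'} : Set (E3 ≃ᵢ E3))) :
        g ∈ Subgroup.closure {R0, R1, R2, R2'} :=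
      Subgroup.subset_closure hg
    exact exists_mem_apply_zero_eq <| fcc_subset_translationSubgroup (mem (by simp))
      (mem (by simp)) (mem (by simp)) (mem (by simp)) e0 e1 e2 e2' hy

theorem vertex_set_K8_12
    (a : ℝ) (ha : a ≠ 0)
    (R0 R1 R2 R2' : E3 ≃ᵢ E3)
    (hR0 : ∀ x : E3, R0 x = pt (-(x 2) + a) (-(x 1)) (-(x 0) + a))
    (hR1 : ∀ x : E3, R1 x = pt (x 1) (x 0) (x 2))
    (hR2 : ∀ x : E3, R2 x = pt (x 0) (-(x 1)) (x 2))
    (hR2' : ∀ x : E3, R2' x = pt (x 2) (x 1) (x 0)) :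
    {y : E3 | ∃ g ∈ Subgroup.closure {R0, R1, R2, R2'}, g 0 = y} =
      {y : E3 | ∃ m1 m2 m3 : ℤ,
        y 0 = a * m1 ∧ y 1 = a * m2 ∧ y 2 = a * m3 ∧ Even (m1 + m2 + m3)} :=
  vertex_set_K8_12_general a R0 R1 R2 R2' hR0 hR1 hR2 hR2'
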